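/- (Meridian surfaces of parabolic type with κ̄ ≡ 0 lie in a hyperplane.) For the meridian surface of parabolic type the identity ⟨z(u,v), n₁(v)⟩ = 0 holds for all (u,v) ∈ I × J. Moreover, if κ̄(v) = 0 for all v ∈ J (i.e. φφ̈ − 2φ̇² − φ² = 0 on J), then n₁ is a constant vector: n₁(v) = n₁(v₀) for all v, v₀ ∈ J. Consequently the image of z is contained in the linear hyperplane {x ∈ ℝ⁴ : ⟨x, N⟩ = 0}, where N = n₁(v₀) is a spacelike unit vector (⟨N,N⟩ = 1), i.e. the surface lies in a hyperplane ℝ³₁ of ℝ⁴₁. -/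

import Mathlib

/-!
The identity `⟨z, n₁⟩ = 0` is a pointwise computation. For the constancy of `n₁`, write
`n₁ = w / √Q` with `Q = φ̇² + φ² = ⟨w, w⟩`. When `φφ̈ = 2φ̇² + φ²` (which forces `φ ≠ 0`), both
`w` and `√Q` solve `y' = (2φ̇/φ) y`, so `n₁` has zero derivative and is constant on the
connected set `J`.
-/

namespace MeridianParabolic

noncomputable section

/-- The Minkowski inner product of signature (3,1) on `ℝ⁴`:
`⟨x,y⟩ = x₁y₁ + x₂y₂ + x₃y₃ − x₄y₄`. -/
def mink (x y : Fin 4 → ℝ) : ℝ := x 0 * y 0 + x 1 * y 1 + x 2 * y 2 - x 3 * y 3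

/-- The first standard basis vector `e₁`. -/
def e1 : Fin 4 → ℝ := ![1, 0, 0, 0]

/-- The second standard basis vector `e₂`. -/
def e2 : Fin 4 → ℝ := ![0, 1, 0, 0]

/-- The lightlike vector `ξ₁ = (e₃ + e₄)/√2`. -/
def xi1 : Fin 4 → ℝ := ![0, 0, 1 / Real.sqrt 2, 1 / Real.sqrt 2]

/-- The lightlike vector `ξ₂ = (−e₃ + e₄)/√2`. -/
def xi2 : Fin 4 → ℝ := ![0, 0, -(1 / Real.sqrt 2), 1 / Real.sqrt 2]

/-- The meridian surface of parabolic type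
`z(u,v) = fφ cos v · e₁ + fφ sin v · e₂ + (fφ²/2 + g) ξ₁ + f ξ₂`. -/
def z (f g φ : ℝ → ℝ) (u v : ℝ) : Fin 4 → ℝ :=
  (f u * φ v * Real.cos v) • e1 + (f u * φ v * Real.sin v) • e2 +
    (f u * (φ v) ^ 2 / 2 + g u) • xi1 + f u • xi2

/-- The partial derivative `z_u`. -/
def zu (f g φ : ℝ → ℝ) (u v : ℝ) : Fin 4 → ℝ := deriv (fun t => z f g φ t v) u

/-- The partial derivative `z_v`. -/
def zv (f g φ : ℝ → ℝ) (u v : ℝ) : Fin 4 → ℝ := deriv (fun t => z f g φ u t) v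

/-- The second partial derivative `z_uu`. -/
def zuu (f g φ : ℝ → ℝ) (u v : ℝ) : Fin 4 → ℝ := deriv (fun t => zu f g φ t v) u

/-- The second partial derivative `z_uv`. -/
def zuv (f g φ : ℝ → ℝ) (u v : ℝ) : Fin 4 → ℝ := deriv (fun t => zu f g φ u t) v

/-- The second partial derivative `z_vv`. -/
def zvv (f g φ : ℝ → ℝ) (u v : ℝ) : Fin 4 → ℝ := deriv (fun t => zv f g φ u t) v

/-- The normal field `n₁ = ((φ̇ sin v + φ cos v) e₁ + (−φ̇ cos v + φ sin v) e₂ + φ² ξ₁)/√(φ̇² + φ²)`. -/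
def n1 (φ : ℝ → ℝ) (v : ℝ) : Fin 4 → ℝ :=
  (Real.sqrt ((deriv φ v) ^ 2 + (φ v) ^ 2))⁻¹ •
    ((deriv φ v * Real.sin v + φ v * Real.cos v) • e1 +
      (-(deriv φ v) * Real.cos v + φ v * Real.sin v) • e2 + (φ v) ^ 2 • xi1)

/-- The normal field `n₂ = √(−f'/(2g')) (φ cos v e₁ + φ sin v e₂ + ((f'φ² − 2g')/(2f')) ξ₁ + ξ₂)`. -/
def n2 (f g φ : ℝ → ℝ) (u v : ℝ) : Fin 4 → ℝ :=
  Real.sqrt (-(deriv f u) / (2 * deriv g u)) •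
    ((φ v * Real.cos v) • e1 + (φ v * Real.sin v) • e2 +
      ((deriv f u * (φ v) ^ 2 - 2 * deriv g u) / (2 * deriv f u)) • xi1 + xi2)

def n1Unnorm (φ : ℝ → ℝ) (v : ℝ) : Fin 4 → ℝ :=
  (deriv φ v * Real.sin v + φ v * Real.cos v) • e1 +
    (-(deriv φ v) * Real.cos v + φ v * Real.sin v) • e2 + (φ v) ^ 2 • xi1

lemma n1_eq_inv_sqrt_smul (φ : ℝ → ℝ) (v : ℝ) :
    n1 φ v = (√((deriv φ v) ^ 2 + (φ v) ^ 2))⁻¹ • n1Unnorm φ v := rfl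

lemma mink_smul_right (c : ℝ) (x y : Fin 4 → ℝ) : mink x (c • y) = c * mink x y := by
  simp only [mink, Pi.smul_apply, smul_eq_mul]; ring

lemma mink_smul_left (c : ℝ) (x y : Fin 4 → ℝ) : mink (c • x) y = c * mink x y := by
  simp only [mink, Pi.smul_apply, smul_eq_mul]; ring

lemma inv_sqrt_two_mul_self : 1 / √2 * (1 / √2) = 1 / 2 := by
  rw [div_mul_div_comm, Real.mul_self_sqrt zero_le_two, one_mul]

lemma mink_z_n1Unnorm (f g φ : ℝ → ℝ) (u v : ℝ) : mink (z f g φ u v) (n1Unnorm φ v) = 0 := by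
  simp only [mink, z, n1Unnorm, e1, e2, xi1, xi2, Pi.add_apply, Pi.smul_apply,
    Matrix.cons_val_zero, Matrix.cons_val_one, Matrix.cons_val_two, Matrix.cons_val_three,
    Matrix.head_cons, Matrix.tail_cons, smul_eq_mul]
  linear_combination f u * φ v ^ 2 * Real.sin_sq_add_cos_sq v -
    2 * f u * φ v ^ 2 * inv_sqrt_two_mul_self

lemma mink_n1Unnorm_self (φ : ℝ → ℝ) (v : ℝ) :
    mink (n1Unnorm φ v) (n1Unnorm φ v) = (deriv φ v) ^ 2 + (φ v) ^ 2 := by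
  simp only [mink, n1Unnorm, e1, e2, xi1, Pi.add_apply, Pi.smul_apply,
    Matrix.cons_val_zero, Matrix.cons_val_one, Matrix.cons_val_two, Matrix.cons_val_three,
    Matrix.head_cons, Matrix.tail_cons, smul_eq_mul]
  linear_combination ((deriv φ v) ^ 2 + (φ v) ^ 2) * Real.sin_sq_add_cos_sq v

lemma mink_z_n1 (f g φ : ℝ → ℝ) (u v : ℝ) : mink (z f g φ u v) (n1 φ v) = 0 := by
  rw [n1_eq_inv_sqrt_smul, mink_smul_right, mink_z_n1Unnorm, mul_zero]

lemma mink_n1_self (φ : ℝ → ℝ) (v : ℝ) (hQ : 0 < (deriv φ v) ^ 2 + (φ v) ^ 2) :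
    mink (n1 φ v) (n1 φ v) = 1 := by
  rw [n1_eq_inv_sqrt_smul, mink_smul_left, mink_smul_right, mink_n1Unnorm_self,
    ← mul_assoc, ← mul_inv, Real.mul_self_sqrt hQ.le, inv_mul_cancel₀ hQ.ne']

lemma _root_.HasDerivAt.inv_sqrt_smul_eq_zero {E : Type*} [NormedAddCommGroup E] [NormedSpace ℝ E]
    {Q : ℝ → ℝ} {w : ℝ → E} {k x : ℝ} (hQ : HasDerivAt Q (2 * k * Q x) x)
    (hw : HasDerivAt w (k • w x) x) (hQpos : 0 < Q x) :
    HasDerivAt (fun t => (√(Q t))⁻¹ • w t) 0 x := by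
  have hsqrt : √(Q x) ≠ 0 := (Real.sqrt_pos.mpr hQpos).ne'
  refine ((hQ.sqrt hQpos.ne').inv hsqrt |>.smul hw).congr_deriv ?_
  rw [smul_smul, ← add_smul]
  convert zero_smul ℝ (w x)
  have hQx : Q x = √(Q x) ^ 2 := (Real.sq_sqrt hQpos.le).symm
  simp only [Pi.inv_apply]
  generalize √(Q x) = s at hsqrt hQx ⊢
  rw [hQx]
  field_simp
  ring

lemma hasDerivAt_n1Unnorm {φ : ℝ → ℝ} {v φ2 : ℝ} (hφ1 : HasDerivAt φ (deriv φ v) v)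
    (hφ2 : HasDerivAt (deriv φ) φ2 v) :
    HasDerivAt (n1Unnorm φ)
      ((φ2 * Real.sin v + 2 * deriv φ v * Real.cos v - φ v * Real.sin v) • e1 +
        (-φ2 * Real.cos v + 2 * deriv φ v * Real.sin v + φ v * Real.cos v) • e2 +
          (2 * φ v * deriv φ v) • xi1) v := by
  have h1 := (hφ2.mul (Real.hasDerivAt_sin v)).add (hφ1.mul (Real.hasDerivAt_cos v))
  have h2 := (hφ2.neg.mul (Real.hasDerivAt_cos v)).add (hφ1.mul (Real.hasDerivAt_sin v))
  rw [Pi.neg_apply] at h2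
  refine (((h1.smul_const e1).add (h2.smul_const e2)).add
    ((hφ1.pow 2).smul_const xi1)).congr_deriv ?_
  congr 3 <;> ring

lemma hasDerivAt_n1_eq_zero {φ : ℝ → ℝ} {v : ℝ} (hφ1 : HasDerivAt φ (deriv φ v) v)
    (hφ2 : HasDerivAt (deriv φ) (deriv (deriv φ) v) v)
    (hQ : 0 < (deriv φ v) ^ 2 + (φ v) ^ 2)
    (hκ : φ v * deriv (deriv φ) v - 2 * (deriv φ v) ^ 2 - (φ v) ^ 2 = 0) :
    HasDerivAt (n1 φ) 0 v := by
  have hφ : φ v ≠ 0 := by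
    intro h
    rw [h] at hκ hQ
    nlinarith
  have hQ' := (hφ2.pow 2).add (hφ1.pow 2)
  refine (hQ'.congr_deriv ?_).inv_sqrt_smul_eq_zero (k := 2 * deriv φ v / φ v)
    ((hasDerivAt_n1Unnorm hφ1 hφ2).congr_deriv ?_) hQ
  · norm_num
    field_simp
    linear_combination deriv φ v * hκ
  · match_scalars <;> field_simp
    · linear_combination Real.sin v * hκ
    · linear_combination -Real.cos v * hκ

lemma _root_.ContDiffOn.hasDerivAt_deriv_deriv {J : Set ℝ} (hJ : IsOpen J) {φ : ℝ → ℝ}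
    (hφ : ContDiffOn ℝ (⊤ : ℕ∞) φ J) {v : ℝ} (hv : v ∈ J) :
    HasDerivAt φ (deriv φ v) v ∧ HasDerivAt (deriv φ) (deriv (deriv φ) v) v := by
  have hJv := hJ.mem_nhds hv
  have hφ' : ContDiffOn ℝ (⊤ : ℕ∞) (deriv φ) J := hφ.deriv_of_isOpen hJ (by exact_mod_cast le_top)
  exact ⟨((hφ.contDiffAt hJv).differentiableAt (by simp)).hasDerivAt,
    ((hφ'.contDiffAt hJv).differentiableAt (by simp)).hasDerivAt⟩

theorem statement19_general
    (I J : Set ℝ)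
    (hJopen : IsOpen J) (hJconn : IsPreconnected J)
    (f g φ : ℝ → ℝ)
    (hφ : ContDiffOn ℝ (⊤ : ℕ∞) φ J)
    (hφpos : ∀ v ∈ J, 0 < (deriv φ v) ^ 2 + (φ v) ^ 2) :
    (∀ u ∈ I, ∀ v ∈ J, mink (z f g φ u v) (n1 φ v) = 0) ∧
    ((∀ v ∈ J, φ v * deriv (deriv φ) v - 2 * (deriv φ v) ^ 2 - (φ v) ^ 2 = 0) →
      (∀ v ∈ J, ∀ v0 ∈ J, n1 φ v = n1 φ v0) ∧
      ∀ v0 ∈ J, mink (n1 φ v0) (n1 φ v0) = 1 ∧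
        ∀ u ∈ I, ∀ v ∈ J, mink (z f g φ u v) (n1 φ v0) = 0) := by
  refine ⟨fun u _ v _ => mink_z_n1 f g φ u v, fun hκ => ?_⟩
  have hn1_deriv : ∀ v ∈ J, HasDerivAt (n1 φ) 0 v := fun v hv =>
    have ⟨hφ1, hφ2⟩ := hφ.hasDerivAt_deriv_deriv hJopen hv
    hasDerivAt_n1_eq_zero hφ1 hφ2 (hφpos v hv) (hκ v hv)
  have hconst : ∀ v ∈ J, ∀ v0 ∈ J, n1 φ v = n1 φ v0 := fun v hv v0 hv0 =>
    hJopen.is_const_of_deriv_eq_zero hJconn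
      (fun x hx => (hn1_deriv x hx).differentiableAt.differentiableWithinAt)
      (fun x hx => (hn1_deriv x hx).deriv) hv hv0
  refine ⟨hconst, fun v0 hv0 => ⟨mink_n1_self φ v0 (hφpos v0 hv0), fun u _ v hv => ?_⟩⟩
  rw [← hconst v hv v0 hv0]
  exact mink_z_n1 f g φ u v

/-- meridian surfaces of parabolic type with `κ̄ ≡ 0` lie in a
hyperplane: the identity `⟨z(u,v), n₁(v)⟩ = 0` always holds; moreover, if
`φφ̈ − 2φ̇² − φ² = 0` on `J` (i.e. `κ̄ ≡ 0`), then `n₁` is constant on `J` and the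
image of `z` is contained in the hyperplane `{x : ⟨x,N⟩ = 0}` where `N = n₁(v₀)` is a
spacelike unit vector, i.e. the surface lies in a hyperplane `ℝ³₁` of `ℝ⁴₁`. -/
theorem statement19
    (I J : Set ℝ) (hIopen : IsOpen I) (hIconn : IsPreconnected I)
    (hJopen : IsOpen J) (hJconn : IsPreconnected J)
    (f g φ : ℝ → ℝ)
    (hf : ContDiffOn ℝ (⊤ : ℕ∞) f I) (hg : ContDiffOn ℝ (⊤ : ℕ∞) g I)
    (hφ : ContDiffOn ℝ (⊤ : ℕ∞) φ J)
    (hfpos : ∀ u ∈ I, 0 < f u)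
    (hfg : ∀ u ∈ I, 0 < -(deriv f u * deriv g u))
    (hφpos : ∀ v ∈ J, 0 < (deriv φ v) ^ 2 + (φ v) ^ 2) :
    (∀ u ∈ I, ∀ v ∈ J, mink (z f g φ u v) (n1 φ v) = 0) ∧
    ((∀ v ∈ J, φ v * deriv (deriv φ) v - 2 * (deriv φ v) ^ 2 - (φ v) ^ 2 = 0) →
      (∀ v ∈ J, ∀ v0 ∈ J, n1 φ v = n1 φ v0) ∧
      ∀ v0 ∈ J, mink (n1 φ v0) (n1 φ v0) = 1 ∧
        ∀ u ∈ I, ∀ v ∈ J, mink (z f g φ u v) (n1 φ v0) = 0) :=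
  statement19_general I J hJopen hJconn f g φ hφ hφpos

end
end MeridianParabolic
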